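/- Let G ∈ M(n, ℂ((z))) and let q_1, …, q_n ∈ ℂ[z⁻¹] be pairwise distinct. Suppose there exists X ∈ M(n, ℂ[[z]]), invertible over ℂ[[z]], such that X G X⁻¹ + X′ X⁻¹ = diag(q_1, …, q_n) · z⁻¹ in M(n, ℂ((z))), where X′ is the entrywise formal derivative of X. Then the characteristic polynomial of G factors completely over ℂ((z)): det(y I_n − G) = ∏_{i=1}^n (y − g_i) in ℂ((z))[y], where g_i ∈ ℂ((z)) satisfies g_i − q_i · z⁻¹ ∈ ℂ[[z]] for each i = 1, …, n. -/

import Mathlib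

/-!
The gauge equation says that `U G U⁻¹ = D - Q` with `D = diag(dᵢ)`, `dᵢ = qᵢ z⁻¹`, and `Q = U′U⁻¹`
a matrix of power series, so `G` and `D - Q` have the same characteristic polynomial. Since the
`qᵢ` are distinct polynomials in `z⁻¹`, each `(dᵢ - dⱼ)⁻¹` with `i ≠ j` lies in `z ℂ[[z]]`. This
lets one solve `(D - Q)(1 + W) = (1 + W)(D + E)` with `W` off-diagonal and `E` diagonal over
`ℂ[[z]]` coefficient by coefficient: the equation for `W` is a fixed point problem for a map that
gains a power of `z`. As `1 + W` is invertible over `ℂ[[z]]`, `D - Q` is similar to the diagonal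
matrix `D + E`.
-/

open scoped PowerSeries LaurentSeries

open Matrix

namespace PowerSeries

variable {R ι κ : Type*} [CommRing R]

def IsXAdicContraction (Φ : Matrix ι κ R⟦X⟧ → Matrix ι κ R⟦X⟧) : Prop :=
  ∀ (m : ℕ) (A B : Matrix ι κ R⟦X⟧), (∀ i j, X ^ m ∣ A i j - B i j) →
    ∀ i j, X ^ (m + 1) ∣ Φ A i j - Φ B i j

/-- For a contraction, coefficient `m` of `Φ W` only depends on the coefficients of `W` below
`m`, so the coefficients of the fixed point can be computed one after the other. -/
noncomputable def fixedPointCoeff (Φ : Matrix ι κ R⟦X⟧ → Matrix ι κ R⟦X⟧) (m : ℕ) :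
    Matrix ι κ R :=
  Matrix.of fun i j => coeff m <| Φ (Matrix.of fun i' j' =>
    mk fun k => if k < m then fixedPointCoeff Φ k i' j' else 0) i j
termination_by m
decreasing_by assumption

noncomputable def fixedPoint (Φ : Matrix ι κ R⟦X⟧ → Matrix ι κ R⟦X⟧) : Matrix ι κ R⟦X⟧ :=
  Matrix.of fun i j => mk fun m => fixedPointCoeff Φ m i j

theorem IsXAdicContraction.isFixedPt_fixedPoint {Φ : Matrix ι κ R⟦X⟧ → Matrix ι κ R⟦X⟧}
    (hΦ : IsXAdicContraction Φ) : Function.IsFixedPt Φ (fixedPoint Φ) := by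
  ext i j m
  set A : Matrix ι κ R⟦X⟧ := Matrix.of fun i' j' =>
    mk fun k => if k < m then fixedPointCoeff Φ k i' j' else 0
  have hA : ∀ i j, X ^ m ∣ A i j - fixedPoint Φ i j := fun i j =>
    X_pow_dvd_iff.mpr fun k hk => by simp [A, fixedPoint, hk]
  have hcoeff := X_pow_dvd_iff.mp (hΦ m A _ hA i j) m m.lt_succ_self
  rw [map_sub, sub_eq_zero] at hcoeff
  rw [← hcoeff, fixedPoint, Matrix.of_apply, coeff_mk, fixedPointCoeff]
  rfl

end PowerSeries

namespace Matrix

variable {R ι κ : Type*} [CommRing R]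

theorem map_mk_span_singleton_eq_iff {A B : Matrix ι κ R} {a : R} :
    A.map (Ideal.Quotient.mk (Ideal.span {a})) = B.map (Ideal.Quotient.mk (Ideal.span {a})) ↔
      ∀ i j, a ∣ A i j - B i j := by
  simp only [← Matrix.ext_iff, map_apply, Ideal.Quotient.eq, Ideal.mem_span_singleton]

theorem dvd_hadamard_sub_hadamard {β A B : Matrix ι κ R} {a b : R} (hβ : ∀ i j, b ∣ β i j)
    (hAB : ∀ i j, a ∣ A i j - B i j) (i : ι) (j : κ) :
    b * a ∣ (β ⊙ A) i j - (β ⊙ B) i j := by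
  rw [hadamard_apply, hadamard_apply, ← mul_sub]
  exact mul_dvd_mul (hβ i j) (hAB i j)

variable [Fintype ι] [DecidableEq ι]

theorem charpoly_eq_of_mul_eq_mul {A B V : Matrix ι ι R} (hV : IsUnit V) (h : A * V = V * B) :
    A.charpoly = B.charpoly := by
  obtain ⟨u, rfl⟩ := hV
  have hB : B = (u : Matrix ι ι R)⁻¹ * A * u := by
    rw [mul_assoc, h, ← mul_assoc, ← coe_units_inv, u.inv_mul, one_mul]
  rw [hB, charpoly_units_conj']

theorem isUnit_one_add_of_X_dvd {W : Matrix ι ι R⟦X⟧} (hW : ∀ i j, PowerSeries.X ∣ W i j) :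
    IsUnit (1 + W) := by
  have hconst : (1 + W).map PowerSeries.constantCoeff = 1 := by
    ext i j
    simp [one_apply, PowerSeries.X_dvd_iff.mp (hW i j)]
  rw [isUnit_iff_isUnit_det, PowerSeries.isUnit_iff_constantCoeff, RingHom.map_det,
    RingHom.mapMatrix_apply, hconst, det_one]
  exact isUnit_one

end Matrix

theorem LaurentSeries.exists_X_dvd_coe_eq_inv {K : Type*} [Field K] {a : K⸨X⸩}
    (ha : a.order < 0) : ∃ b : K⟦X⟧, PowerSeries.X ∣ b ∧ (b : K⸨X⸩) = a⁻¹ := by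
  have ha0 : a ≠ 0 := by
    rintro rfl
    simp at ha
  have horder : a⁻¹.order = -a.order := by
    have := HahnSeries.order_mul (inv_ne_zero ha0) ha0
    rw [inv_mul_cancel₀ ha0, HahnSeries.order_one] at this
    omega
  exact ⟨PowerSeries.X ^ (-a.order).toNat * a⁻¹.powerSeriesPart,
    dvd_mul_of_dvd_left (dvd_pow_self _ (by omega)) _, X_order_mul_powerSeriesPart (by omega)⟩

theorem LaurentSeries.exists_X_dvd_coe_eq_inv_sub {ι K : Type*} [Field K] {d : ι → K⸨X⸩}
    (hd : Pairwise fun i j => (d i - d j).order < 0) :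
    ∃ β : Matrix ι ι K⟦X⟧, (∀ i j, PowerSeries.X ∣ β i j) ∧
      ∀ i j, (β i j : K⸨X⸩) = (d i - d j)⁻¹ := by
  have h (i j : ι) : ∃ b : K⟦X⟧, PowerSeries.X ∣ b ∧ (b : K⸨X⸩) = (d i - d j)⁻¹ := by
    by_cases hij : i = j
    · exact ⟨0, dvd_zero _, by simp [hij]⟩
    · exact LaurentSeries.exists_X_dvd_coe_eq_inv (hd hij)
  choose β hβ using h
  exact ⟨Matrix.of β, fun i j => (hβ i j).1, fun i j => (hβ i j).2⟩

theorem LaurentSeries.order_mul_single_neg_one_neg {K : Type*} [Field K] {a : K⸨X⸩}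
    (ha : a ≠ 0) (hpos : ∀ k : ℤ, 0 < k → a.coeff k = 0) :
    (a * HahnSeries.single (-1) 1).order < 0 := by
  have ha' : a.order ≤ 0 := by
    by_contra! h
    exact ha (HahnSeries.coeff_order_eq_zero.mp (hpos _ h))
  rw [HahnSeries.order_mul ha (HahnSeries.single_ne_zero one_ne_zero),
    HahnSeries.order_single one_ne_zero]
  omega

section Splitting

variable {R ι : Type*} [CommRing R] [Fintype ι] [DecidableEq ι]

def splittingResidual (Q W : Matrix ι ι R) : Matrix ι ι R :=
  Q * (1 + W) - W * diagonal (diag (Q * (1 + W)))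

theorem splittingResidual_apply (Q W : Matrix ι ι R) (i j : ι) :
    splittingResidual Q W i j = (Q * (1 + W)) i j - W i j * (Q * (1 + W)) j j := by
  simp [splittingResidual, mul_diagonal]

theorem splittingResidual_map {S : Type*} [CommRing S] (f : R →+* S) (Q W : Matrix ι ι R) :
    (splittingResidual Q W).map f = splittingResidual (Q.map f) (W.map f) := by
  have hdiag (M : Matrix ι ι R) : (diagonal (diag M)).map f = diagonal (diag (M.map f)) :=
    diagonal_map f.map_zero
  simp only [splittingResidual, ← f.mapMatrix_apply, map_sub, map_mul, map_add, map_one] at hdiag ⊢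
  rw [hdiag, map_mul, map_add, map_one]

theorem isXAdicContraction_hadamard_splittingResidual {β Q : Matrix ι ι R⟦X⟧}
    (hβ : ∀ i j, PowerSeries.X ∣ β i j) :
    PowerSeries.IsXAdicContraction fun W => β ⊙ splittingResidual Q W := by
  intro m A B hAB i j
  rw [pow_succ']
  refine dvd_hadamard_sub_hadamard hβ ?_ i j
  rw [← map_mk_span_singleton_eq_iff] at hAB ⊢
  rw [splittingResidual_map, splittingResidual_map, hAB]

variable {K : Type*} [Field K] {d : ι → K⸨X⸩}

/-- The fixed point equation says that the off-diagonal entries of `W` solve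
`(dᵢ - dⱼ) Wᵢⱼ = (Q(1 + W))ᵢⱼ - Wᵢⱼ (Q(1 + W))ⱼⱼ`, which is the off-diagonal part of
the similarity; its diagonal part defines the diagonal correction. -/
theorem sub_map_mul_eq_mul_diagonal_of_isFixedPt {β Q W : Matrix ι ι K⟦X⟧}
    (hd : Pairwise fun i j => d i ≠ d j) (hβ : ∀ i j, (β i j : K⸨X⸩) = (d i - d j)⁻¹)
    (hW : Function.IsFixedPt (fun W => β ⊙ splittingResidual Q W) W) :
    (diagonal d - Q.map (HahnSeries.ofPowerSeries ℤ K)) * (1 + W).map (HahnSeries.ofPowerSeries ℤ K)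
      = (1 + W).map (HahnSeries.ofPowerSeries ℤ K) *
        diagonal fun i => d i - ((Q * (1 + W)) i i : K⸨X⸩) := by
  have hW' : β ⊙ splittingResidual Q W = W := hW
  refine Matrix.ext fun i j => ?_
  have hWij : W i j = β i j * ((Q * (1 + W)) i j - W i j * (Q * (1 + W)) j j) := by
    rw [← splittingResidual_apply, ← hadamard_apply, hW']
  rw [sub_mul, Matrix.sub_apply, diagonal_mul, ← Matrix.map_mul, mul_diagonal]
  simp only [map_apply, Matrix.add_apply]
  by_cases hij : i = j
  · subst hij
    have hβii : β i i = 0 :=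
      (map_eq_zero_iff _ HahnSeries.ofPowerSeries_injective).mp ((hβ i i).trans (by simp))
    have hWii : W i i = 0 := by rw [hWij, hβii, zero_mul]
    simp [hWii]
  · have h := congrArg (HahnSeries.ofPowerSeries ℤ K) hWij
    rw [map_mul, hβ, map_sub, map_mul, eq_inv_mul_iff_mul_eq₀ (sub_ne_zero.mpr (hd hij))] at h
    simp only [one_apply_ne hij, zero_add]
    linear_combination h

theorem exists_isUnit_sub_map_mul_eq_mul_diagonal
    (hd : Pairwise fun i j => (d i - d j).order < 0) (Q : Matrix ι ι K⟦X⟧) :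
    ∃ (V : Matrix ι ι K⟦X⟧) (e : ι → K⟦X⟧), IsUnit V ∧
      (diagonal d - Q.map (HahnSeries.ofPowerSeries ℤ K)) * V.map (HahnSeries.ofPowerSeries ℤ K)
        = V.map (HahnSeries.ofPowerSeries ℤ K) * diagonal fun i => d i + (e i : K⸨X⸩) := by
  obtain ⟨β, hβX, hβ⟩ := LaurentSeries.exists_X_dvd_coe_eq_inv_sub hd
  set W := PowerSeries.fixedPoint fun W => β ⊙ splittingResidual Q W
  have hW : Function.IsFixedPt (fun W => β ⊙ splittingResidual Q W) W :=
    (isXAdicContraction_hadamard_splittingResidual hβX).isFixedPt_fixedPoint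
  have hWX (i j : ι) : PowerSeries.X ∣ W i j := by
    rw [← hW]
    exact dvd_mul_of_dvd_left (hβX i j) _
  have hd' : Pairwise fun i j => d i ≠ d j := fun i j hij h => by
    simpa [h] using hd hij
  refine ⟨1 + W, fun i => -(Q * (1 + W)) i i, isUnit_one_add_of_X_dvd hWX, ?_⟩
  simpa only [map_neg, ← sub_eq_add_neg] using sub_map_mul_eq_mul_diagonal_of_isFixedPt hd' hβ hW

end Splitting

/-- **Factorization of the characteristic polynomial of a regular semisimple matrix.**
Let `G` be a matrix over `ℂ((z))` and `q₁, …, qₙ ∈ ℂ[z⁻¹]` pairwise distinct.  If some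
`U` over `ℂ[[z]]`, invertible over `ℂ[[z]]`, satisfies
`U G U⁻¹ + U′U⁻¹ = diag(q₁, …, qₙ)·z⁻¹`, then
`det(y Iₙ − G) = ∏ᵢ (y − gᵢ)` in `ℂ((z))[y]` with `gᵢ − qᵢ z⁻¹ ∈ ℂ[[z]]` for each `i`. -/
theorem charpoly_factors_of_regular_semisimple
    (n : ℕ) (G : Matrix (Fin n) (Fin n) (LaurentSeries ℂ))
    (q : Fin n → LaurentSeries ℂ)
    (hq : ∀ i, ∀ k : ℤ, 0 < k → (q i).coeff k = 0)
    (hqdist : Function.Injective q)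
    (U : Matrix (Fin n) (Fin n) (PowerSeries ℂ)) (hU : IsUnit U)
    (hgauge :
      U.map (HahnSeries.ofPowerSeries ℤ ℂ) * G * (U.map (HahnSeries.ofPowerSeries ℤ ℂ))⁻¹
        + (U.map (PowerSeries.derivative ℂ)).map (HahnSeries.ofPowerSeries ℤ ℂ)
            * (U.map (HahnSeries.ofPowerSeries ℤ ℂ))⁻¹
        = Matrix.diagonal fun i => q i * HahnSeries.single (-1 : ℤ) (1 : ℂ)) :
    ∃ g : Fin n → LaurentSeries ℂ,
      G.charpoly = (∏ i, (Polynomial.X - Polynomial.C (g i))) ∧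
      ∀ i, ∀ k : ℤ, k < 0 →
        (g i - q i * HahnSeries.single (-1 : ℤ) (1 : ℂ)).coeff k = 0 := by
  set φ := HahnSeries.ofPowerSeries ℤ ℂ
  set d : Fin n → ℂ⸨X⸩ := fun i => q i * HahnSeries.single (-1) 1 with hd
  obtain ⟨u, rfl⟩ := hU
  set Uinv : Matrix (Fin n) (Fin n) ℂ⟦X⟧ := ↑u⁻¹
  have hinv : ((u : Matrix (Fin n) (Fin n) ℂ⟦X⟧).map φ)⁻¹ = Uinv.map φ :=
    inv_eq_right_inv (by rw [← Matrix.map_mul, u.mul_inv, Matrix.map_one _ φ.map_zero φ.map_one])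
  set Q := (u : Matrix (Fin n) (Fin n) ℂ⟦X⟧).map (PowerSeries.derivative ℂ) * Uinv
  have hconj : (u : Matrix (Fin n) (Fin n) ℂ⟦X⟧).map φ * G * ((u : Matrix _ _ ℂ⟦X⟧).map φ)⁻¹ =
      diagonal d - Q.map φ := by
    rw [eq_sub_iff_add_eq, Matrix.map_mul, ← hinv]
    exact hgauge
  have hpoles : Pairwise fun i j => (d i - d j).order < 0 := fun i j hij => by
    change (q i * _ - q j * _).order < 0
    rw [← sub_mul]
    refine LaurentSeries.order_mul_single_neg_one_neg (sub_ne_zero.mpr (hqdist.ne hij)) ?_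
    intro k hk
    rw [HahnSeries.coeff_sub, hq i k hk, hq j k hk, sub_zero]
  obtain ⟨V, e, hV, hVconj⟩ := exists_isUnit_sub_map_mul_eq_mul_diagonal hpoles Q
  refine ⟨fun i => d i + e i, ?_, fun i k hk => ?_⟩
  · rw [← charpoly_units_conj (Units.map φ.mapMatrix.toMonoidHom u) G]
    change ((u : Matrix _ _ ℂ⟦X⟧).map φ * G * ((u : Matrix _ _ ℂ⟦X⟧).map φ)⁻¹).charpoly = _
    rw [hconj, charpoly_eq_of_mul_eq_mul (hV.map φ.mapMatrix) hVconj, charpoly_diagonal]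
  · simp [hd, PowerSeries.coeff_coe, hk]
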